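/- arXiv:2511.10462 — 2 statements merged into one kernel-verified Lean document; each statement's English description precedes it below -/
import Mathlib

section
/- For every ℓ ∈ ℕ, the k-linear map D_ℓ : A → A determined on basis elements by D_ℓ(a_{j,i}s^α) := (2α + |i−j|)·a_{j,i}s^{α+ℓ} is a derivation of A: D_ℓ(x·y) = D_ℓ(x)·y + x·D_ℓ(y) for all x, y ∈ A. (These derivations realize the degree-1 A∞-natural transformations id ⇒ id of the paper, η¹(a) = 𝔮(a)·(1/2)Σ_ℓ σ_ℓ a s^ℓ, where 𝔮(a_{j,i}s^α) = 2α + |i−j| is the q-grading.) -/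
/-- The dot-count correction `δ(i,j,k)` in the KLRW/Coulomb-branch algebra. -/
def dlt (i j k : ℤ) : ℕ :=
  if 0 ≤ (i - j) * (j - k) then 0 else min (i - j).natAbs (j - k).natAbs

namespace KLRW

/-- Index of a basis element `a_{j,i}s^α`: `(j, i, α)` (target, source, number of dots). -/
abbrev B (n : ℕ) := Fin (n + 1) × Fin (n + 1) × ℕ

/-- The underlying free `k`-module of the KLRW algebra of the Fukaya category of the
Coulomb branch `M(•,1)` with `n` punctures: the free module on the symbols `a_{j,i}s^α`. -/
abbrev A (n : ℕ) (k : Type*) [Field k] := B n →₀ k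

variable (n : ℕ) (k : Type*) [Field k]

/-- `δ(i,j,l)` evaluated on vertex indices. -/
def dd (i j l : Fin (n + 1)) : ℕ := dlt ((i : ℕ) : ℤ) ((j : ℕ) : ℤ) ((l : ℕ) : ℤ)

/-- The basis element `a_{j,i}s^α`. -/
noncomputable def bas (j i : Fin (n + 1)) (α : ℕ) : A n k := Finsupp.single (j, i, α) 1

/-- Product of two basis elements:
`(a_{k,j'}s^β)·(a_{j,i}s^α) = a_{k,i}s^{β+α+δ(i,j,k)}` if `j' = j`, and `0` otherwise. -/
noncomputable def mulB (x y : B n) : A n k :=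
  if x.2.1 = y.1 then
    Finsupp.single (x.1, y.2.1, x.2.2 + y.2.2 + dd n y.2.1 y.1 x.1) 1
  else 0

/-- The `k`-bilinear multiplication on `A` determined by `mulB` on basis elements. -/
noncomputable def mul (x y : A n k) : A n k :=
  x.sum fun xb c => y.sum fun yb d => (c * d) • mulB n k xb yb

/-- The element `1 = Σ_{i=0}^n e_i` where `e_i = a_{i,i}s^0`. -/
noncomputable def one : A n k := Finset.univ.sum fun i : Fin (n + 1) => bas n k i i 0

end KLRW

/-!
Give `a_{j,i}s^α` the q-degree `2α + |i - j|`. The triangle-inequality defect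
`|i - j| + |j - l| - |i - l|` equals `2 δ(i,j,l)`, so the multiplication is additive in the
q-degree. Each `D_ℓ` acts on basis elements by the q-degree followed by the shift
`s^α ↦ s^{α+ℓ}`, and this shift commutes with multiplication from either side; Leibniz's rule on
basis elements is then additivity of the q-degree, and it extends to `A` by bilinearity.
-/

lemma natAbs_sub_add_natAbs_sub (i j l : ℤ) :
    (i - j).natAbs + (j - l).natAbs = (i - l).natAbs + 2 * dlt i j l := by
  unfold dlt
  split_ifs with h
  · rcases mul_nonneg_iff.mp h with ⟨_, _⟩ | ⟨_, _⟩ <;> omega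
  · rcases mul_neg_iff.mp (lt_of_not_ge h) with ⟨_, _⟩ | ⟨_, _⟩ <;> omega

namespace KLRW

variable {n : ℕ} {k : Type*} [Field k]

def qdeg (b : B n) : ℕ := 2 * b.2.2 + (((b.2.1 : ℕ) : ℤ) - ((b.1 : ℕ) : ℤ)).natAbs

def shift (ℓ : ℕ) (b : B n) : B n := (b.1, b.2.1, b.2.2 + ℓ)

def mulIdx (x y : B n) : B n := (x.1, y.2.1, x.2.2 + y.2.2 + dd n y.2.1 y.1 x.1)

lemma mulB_of_eq {x y : B n} (h : x.2.1 = y.1) :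
    mulB n k x y = Finsupp.single (mulIdx x y) 1 :=
  if_pos h

lemma mulB_of_ne {x y : B n} (h : x.2.1 ≠ y.1) : mulB n k x y = 0 :=
  if_neg h

lemma mulIdx_shift_left (ℓ : ℕ) (x y : B n) :
    mulIdx (shift ℓ x) y = shift ℓ (mulIdx x y) := by
  simp only [mulIdx, shift, Prod.mk.injEq, true_and]
  omega

lemma mulIdx_shift_right (ℓ : ℕ) (x y : B n) :
    mulIdx x (shift ℓ y) = shift ℓ (mulIdx x y) := by
  simp only [mulIdx, shift, Prod.mk.injEq, true_and]
  omega

lemma qdeg_mulIdx {x y : B n} (h : x.2.1 = y.1) :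
    qdeg (mulIdx x y) = qdeg x + qdeg y := by
  obtain ⟨l, j', β⟩ := x
  obtain ⟨j, i, α⟩ := y
  obtain rfl : j = j' := h.symm
  have := natAbs_sub_add_natAbs_sub ((i : ℕ) : ℤ) ((j : ℕ) : ℤ) ((l : ℕ) : ℤ)
  simp only [qdeg, mulIdx, dd]
  omega

lemma zero_mul (y : A n k) : mul n k 0 y = 0 := by simp [mul]

lemma mul_zero (x : A n k) : mul n k x 0 = 0 := by simp [mul]

lemma add_mul (x x' y : A n k) : mul n k (x + x') y = mul n k x y + mul n k x' y := by
  unfold mul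
  rw [Finsupp.sum_add_index' (by simp) fun _ _ _ => ?_]
  rw [← Finsupp.sum_add]
  exact Finsupp.sum_congr fun _ _ => by rw [_root_.add_mul, add_smul]

lemma mul_add (x y y' : A n k) : mul n k x (y + y') = mul n k x y + mul n k x y' := by
  unfold mul
  rw [← Finsupp.sum_add]
  exact Finsupp.sum_congr fun _ _ => Finsupp.sum_add_index' (by simp)
    fun _ _ _ => by rw [_root_.mul_add, add_smul]

lemma single_mul_single (x y : B n) (c d : k) :
    mul n k (Finsupp.single x c) (Finsupp.single y d) = (c * d) • mulB n k x y := by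
  unfold mul
  rw [Finsupp.sum_single_index (by simp [Finsupp.sum]), Finsupp.sum_single_index (by simp)]

lemma leibniz_of_leibniz_single (D : A n k →ₗ[k] A n k)
    (hD : ∀ (x y : B n) (c d : k),
      D (mul n k (Finsupp.single x c) (Finsupp.single y d)) =
        mul n k (D (Finsupp.single x c)) (Finsupp.single y d) +
          mul n k (Finsupp.single x c) (D (Finsupp.single y d)))
    (x y : A n k) : D (mul n k x y) = mul n k (D x) y + mul n k x (D y) := by
  induction x using Finsupp.induction_linear with
  | zero => simp only [zero_mul, map_zero, add_zero]
  | add x x' hx hx' =>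
    rw [add_mul, map_add, map_add, add_mul, add_mul, hx, hx']
    abel
  | single b c =>
    induction y using Finsupp.induction_linear with
    | zero => simp only [mul_zero, map_zero, add_zero]
    | add y y' hy hy' =>
      rw [mul_add, map_add, map_add, mul_add, mul_add, hy, hy']
      abel
    | single b' d => exact hD b b' c d

section QDerivation

variable {ℓ : ℕ} {D : A n k →ₗ[k] A n k}
  (hD : ∀ (j i : Fin (n + 1)) (α : ℕ),
    D (bas n k j i α) = ((2 * α + (((i : ℕ) : ℤ) - ((j : ℕ) : ℤ)).natAbs : ℕ) : k) •
      bas n k j i (α + ℓ))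
include hD

lemma apply_single (b : B n) (c : k) :
    D (Finsupp.single b c) = Finsupp.single (shift ℓ b) (c * qdeg b) := by
  obtain ⟨j, i, α⟩ := b
  have hsingle : Finsupp.single (j, i, α) c = c • bas n k j i α := by
    rw [bas, Finsupp.smul_single, smul_eq_mul, mul_one]
  rw [hsingle, map_smul, hD, bas, smul_smul, Finsupp.smul_single, smul_eq_mul, mul_one]
  rfl

lemma leibniz_single (x y : B n) (c d : k) :
    D (mul n k (Finsupp.single x c) (Finsupp.single y d)) =
      mul n k (D (Finsupp.single x c)) (Finsupp.single y d) +
        mul n k (Finsupp.single x c) (D (Finsupp.single y d)) := by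
  simp only [apply_single hD, single_mul_single]
  by_cases h : x.2.1 = y.1
  · rw [mulB_of_eq h, mulB_of_eq (x := shift ℓ x) h, mulB_of_eq (y := shift ℓ y) h, map_smul,
      apply_single hD, mulIdx_shift_left, mulIdx_shift_right]
    simp only [Finsupp.smul_single, smul_eq_mul, ← Finsupp.single_add, qdeg_mulIdx h]
    congr 1
    push_cast
    ring
  · rw [mulB_of_ne h, mulB_of_ne (x := shift ℓ x) h, mulB_of_ne (y := shift ℓ y) h]
    simp

end QDerivation

end KLRW

theorem klrw_qgrading_derivation_general (n : ℕ) (k : Type*) [Field k] (ℓ : ℕ)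
    (D : KLRW.A n k →ₗ[k] KLRW.A n k)
    (hD : ∀ (j i : Fin (n + 1)) (α : ℕ),
      D (KLRW.bas n k j i α)
        = ((2 * α + (((i : ℕ) : ℤ) - ((j : ℕ) : ℤ)).natAbs : ℕ) : k) •
            KLRW.bas n k j i (α + ℓ)) :
    ∀ x y : KLRW.A n k,
      D (KLRW.mul n k x y) = KLRW.mul n k (D x) y + KLRW.mul n k x (D y) :=
  KLRW.leibniz_of_leibniz_single D (KLRW.leibniz_single hD)

/-- For each `ℓ`, the `k`-linear map `D_ℓ : A → A` determined on basis elements by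
`D_ℓ(a_{j,i}s^α) = (2α + |i−j|)·a_{j,i}s^{α+ℓ}` is a derivation of the KLRW algebra:
`D_ℓ(x·y) = D_ℓ(x)·y + x·D_ℓ(y)`.  (These derivations realize the degree-1 A∞-natural
transformations `id ⇒ id`, via the q-grading `𝔮(a_{j,i}s^α) = 2α + |i−j|`.) -/
theorem klrw_qgrading_derivation (n : ℕ) (hn : 1 ≤ n) (k : Type*) [Field k] (ℓ : ℕ)
    (D : KLRW.A n k →ₗ[k] KLRW.A n k)
    (hD : ∀ (j i : Fin (n + 1)) (α : ℕ),
      D (KLRW.bas n k j i α)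
        = ((2 * α + (((i : ℕ) : ℤ) - ((j : ℕ) : ℤ)).natAbs : ℕ) : k) •
            KLRW.bas n k j i (α + ℓ)) :
    ∀ x y : KLRW.A n k,
      D (KLRW.mul n k x y) = KLRW.mul n k (D x) y + KLRW.mul n k x (D y) :=
  klrw_qgrading_derivation_general n k ℓ D hD
end

section
/- For every m ≥ 1 one has ∂_m ∘ ∂_{m+1} = 0, and moreover ∂_0 ∘ ∂_1 = 0; that is, the bimodules P_m with the maps ∂_m form a chain complex of (A,A)-bimodules augmented over A by ∂_0. -/
namespace CS

/-- Vertices `{0, …, n}` of the KLRW quiver. -/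
abbrev Vtx (n : ℕ) := Fin (n + 1)

/-- Index of a basis element `a_{j,i}s^α` of the KLRW algebra: `(j, i, α)`
(target, source, number of dots). -/
abbrev B (n : ℕ) := Vtx n × Vtx n × ℕ

/-- The KLRW algebra `A` as a free `k`-module on the symbols `a_{j,i}s^α`. -/
abbrev A (n : ℕ) (k : Type*) [Field k] := B n →₀ k

/-- `δ(i,j,l)` evaluated on vertices. -/
def dd (n : ℕ) (i j l : Vtx n) : ℕ := dlt ((i : ℕ) : ℤ) ((j : ℕ) : ℤ) ((l : ℕ) : ℤ)

/-- The arrows of the KLRW quiver: `p i : i → i+1`, `q i : i+1 → i`, loops `s i : i → i`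
(`p i` stands for the paper's `p_{i+1}`). -/
inductive Arr (n : ℕ) where
  | p (i : Fin n)
  | q (i : Fin n)
  | s (i : Vtx n)

/-- The ambiguities `P^m_{i+1}, Q^m_i, sP^m_{i+1}, sQ^m_i` indexing `S_m` for `m ≥ 2`
(`P i` stands for `P^m_{i+1}`, etc.). -/
inductive Shi (n : ℕ) where
  | P (i : Fin n)
  | Q (i : Fin n)
  | sP (i : Fin n)
  | sQ (i : Fin n)

/-- The index sets `S_m`: vertices for `m = 0`, arrows for `m = 1`, ambiguities for
`m ≥ 2`. -/
abbrev Sym (n : ℕ) (m : ℕ) : Type :=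
  match m with
  | 0 => Vtx n
  | 1 => Arr n
  | _ + 2 => Shi n

/-- Source vertex of an arrow. -/
def arrSrc {n : ℕ} : Arr n → Vtx n
  | .p i => i.castSucc
  | .q i => i.succ
  | .s i => i

/-- Target vertex of an arrow. -/
def arrTgt {n : ℕ} : Arr n → Vtx n
  | .p i => i.succ
  | .q i => i.castSucc
  | .s i => i

/-- Target vertex of an ambiguity (independent of its degree). -/
def shiTgt {n : ℕ} : Shi n → Vtx n
  | .P i => i.succ
  | .Q i => i.castSucc
  | .sP i => i.succ
  | .sQ i => i.castSucc

/-- Source vertex of an ambiguity of even degree. -/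
def shiSrcE {n : ℕ} : Shi n → Vtx n
  | .P i => i.succ
  | .Q i => i.castSucc
  | .sP i => i.castSucc
  | .sQ i => i.succ

/-- Source vertex of an ambiguity of odd degree. -/
def shiSrcO {n : ℕ} : Shi n → Vtx n
  | .P i => i.castSucc
  | .Q i => i.succ
  | .sP i => i.succ
  | .sQ i => i.castSucc

/-- Target vertex of an element of `S_m`. -/
def symTgt (n : ℕ) : (m : ℕ) → Sym n m → Vtx n
  | 0, v => v
  | 1, γ => arrTgt γ
  | _ + 2, w => shiTgt w

/-- Source vertex of an element of `S_m`. -/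
def symSrc (n : ℕ) : (m : ℕ) → Sym n m → Vtx n
  | 0, v => v
  | 1, γ => arrSrc γ
  | m + 2, w => if Even (m + 2) then shiSrcE w else shiSrcO w

/-- Generators of the projective bimodule `P_m`: triples `a ⊗ w ⊗ b` with `w ∈ S_m` and
basis elements `a, b` of `A` such that `source(a) = tgt(w)` and `target(b) = src(w)`. -/
abbrev Gen (n m : ℕ) :=
  {g : B n × Sym n m × B n // g.1.2.1 = symTgt n m g.2.1 ∧ (g.2.2).1 = symSrc n m g.2.1}

/-- The projective `(A,A)`-bimodule `P_m = A ⊗ kS_m ⊗ A`: the free `k`-module on the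
compatible triples. -/
abbrev P (n : ℕ) (k : Type*) [Field k] (m : ℕ) := Gen n m →₀ k

variable (n : ℕ) (k : Type*) [Field k]

/-- The generator `a ⊗ w ⊗ b`, interpreted as `0` if the triple is not compatible
(all triples appearing in the differentials below are compatible). -/
noncomputable def genSingle (m : ℕ) (a : B n) (w : Sym n m) (b : B n) : P n k m :=
  if h : a.2.1 = symTgt n m w ∧ b.1 = symSrc n m w then
    Finsupp.single ⟨(a, w, b), h⟩ 1
  else 0

/-- Left action of `A` on `P_m`: `x·(a⊗w⊗b) = (x·a)⊗w⊗b`, expanding products in `A`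
and discarding zero terms. -/
noncomputable def actL (m : ℕ) (x : A n k) (v : P n k m) : P n k m :=
  x.sum fun xb c => v.sum fun g d =>
    (c * d) •
      (if xb.2.1 = g.1.1.1 then
        genSingle n k m
          (xb.1, g.1.1.2.1, xb.2.2 + g.1.1.2.2 + dd n g.1.1.2.1 g.1.1.1 xb.1)
          g.1.2.1 g.1.2.2
      else 0)

/-- Right action of `A` on `P_m`: `(a⊗w⊗b)·y = a⊗w⊗(b·y)`, expanding products in `A`
and discarding zero terms. -/
noncomputable def actR (m : ℕ) (v : P n k m) (y : A n k) : P n k m :=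
  v.sum fun g d => y.sum fun yb c =>
    (d * c) •
      (if g.1.2.2.2.1 = yb.1 then
        genSingle n k m g.1.1 g.1.2.1
          (g.1.2.2.1, yb.2.1, g.1.2.2.2.2 + yb.2.2 + dd n yb.2.1 yb.1 g.1.2.2.1)
      else 0)

/-- The augmentation `∂_0 : P_0 → A`, `a ⊗ e_i ⊗ b ↦ a·b`. -/
noncomputable def bnd0 (v : P n k 0) : A n k :=
  v.sum fun g c =>
    if g.1.1.2.1 = g.1.2.2.1 then
      Finsupp.single
        (g.1.1.1, g.1.2.2.2.1,
          g.1.1.2.2 + g.1.2.2.2.2 + dd n g.1.2.2.2.1 g.1.2.2.1 g.1.1.1) c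
    else 0

/-- The idempotent basis element `e_v = a_{v,v}s^0`. -/
def eB {n : ℕ} (v : Vtx n) : B n := (v, v, 0)

/-- The basis element `p_{i+1} = a_{i+1,i}s^0`. -/
def pB {n : ℕ} (i : Fin n) : B n := (i.succ, i.castSucc, 0)

/-- The basis element `q_i = a_{i,i+1}s^0`. -/
def qB {n : ℕ} (i : Fin n) : B n := (i.castSucc, i.succ, 0)

/-- The basis element `s_v = a_{v,v}s^1` (in the differential formulas `s_i` denotes
`a_{i,i}s^1`). -/
def sB {n : ℕ} (v : Vtx n) : B n := (v, v, 1)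

/-- The basis element of `A` corresponding to an arrow (`s i ↦ a_{i,i}s^1`). -/
def arrB {n : ℕ} : Arr n → B n
  | .p i => pB i
  | .q i => qB i
  | .s i => sB i

/-- `P^m_{i+1}` as an element of `S_m`, for `m ≥ 1` (with `P¹_{i+1} := p_{i+1}`). -/
def lowP (n : ℕ) : (m : ℕ) → Fin n → Sym n (m + 1)
  | 0, i => Arr.p i
  | _ + 1, i => Shi.P i

/-- `Q^m_i` as an element of `S_m`, for `m ≥ 1` (with `Q¹_i := q_i`). -/
def lowQ (n : ℕ) : (m : ℕ) → Fin n → Sym n (m + 1)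
  | 0, i => Arr.q i
  | _ + 1, i => Shi.Q i

/-- `sP^m_{i+1}` as an element of `S_m`, for `m ≥ 1` (with `sP¹_{i+1} := s_{i+1}`). -/
def lowSP (n : ℕ) : (m : ℕ) → Fin n → Sym n (m + 1)
  | 0, i => Arr.s i.succ
  | _ + 1, i => Shi.sP i

/-- `sQ^m_i` as an element of `S_m`, for `m ≥ 1` (with `sQ¹_i := s_i`). -/
def lowSQ (n : ℕ) : (m : ℕ) → Fin n → Sym n (m + 1)
  | 0, i => Arr.s i.castSucc
  | _ + 1, i => Shi.sQ i

/-- The idempotent at the target of `w` (the left "1" in the differential formulas). -/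
def oneL (m : ℕ) (w : Sym n m) : B n := eB (symTgt n m w)

/-- The idempotent at the source of `w` (the right "1" in the differential formulas). -/
def oneR (m : ℕ) (w : Sym n m) : B n := eB (symSrc n m w)

/-- Value of the differential `∂_{m+1}` on the generator `1 ⊗ w ⊗ 1`, `w ∈ S_{m+1}`. -/
noncomputable def dGen : (m : ℕ) → Sym n (m + 1) → P n k m
  | 0, γ =>
      genSingle n k 0 (eB (arrTgt γ)) (arrTgt γ) (arrB γ)
        - genSingle n k 0 (arrB γ) (arrSrc γ) (eB (arrSrc γ))
  | m + 1, w =>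
      if Even (m + 2) then
        -- the formulas for `∂_m` with `m ≥ 2` even
        match w with
        | Shi.Q i =>
            genSingle n k (m + 1) (oneL n (m + 1) (lowQ n m i)) (lowQ n m i) (pB i)
              + genSingle n k (m + 1) (qB i) (lowP n m i) (oneR n (m + 1) (lowP n m i))
              - genSingle n k (m + 1) (oneL n (m + 1) (lowSQ n m i)) (lowSQ n m i)
                  (oneR n (m + 1) (lowSQ n m i))
        | Shi.P i =>
            genSingle n k (m + 1) (oneL n (m + 1) (lowP n m i)) (lowP n m i) (qB i)
              + genSingle n k (m + 1) (pB i) (lowQ n m i) (oneR n (m + 1) (lowQ n m i))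
              - genSingle n k (m + 1) (oneL n (m + 1) (lowSP n m i)) (lowSP n m i)
                  (oneR n (m + 1) (lowSP n m i))
        | Shi.sP i =>
            genSingle n k (m + 1) (oneL n (m + 1) (lowSP n m i)) (lowSP n m i) (pB i)
              + genSingle n k (m + 1) (sB i.succ) (lowP n m i) (oneR n (m + 1) (lowP n m i))
              - genSingle n k (m + 1) (pB i) (lowSQ n m i) (oneR n (m + 1) (lowSQ n m i))
              - genSingle n k (m + 1) (oneL n (m + 1) (lowP n m i)) (lowP n m i) (sB i.castSucc)
        | Shi.sQ i =>
            genSingle n k (m + 1) (oneL n (m + 1) (lowSQ n m i)) (lowSQ n m i) (qB i)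
              + genSingle n k (m + 1) (sB i.castSucc) (lowQ n m i) (oneR n (m + 1) (lowQ n m i))
              - genSingle n k (m + 1) (qB i) (lowSP n m i) (oneR n (m + 1) (lowSP n m i))
              - genSingle n k (m + 1) (oneL n (m + 1) (lowQ n m i)) (lowQ n m i) (sB i.succ)
      else
        -- the formulas for `∂_m` with `m ≥ 3` odd
        match w with
        | Shi.Q i =>
            genSingle n k (m + 1) (oneL n (m + 1) (lowQ n m i)) (lowQ n m i) (qB i)
              - genSingle n k (m + 1) (qB i) (lowP n m i) (oneR n (m + 1) (lowP n m i))
              + genSingle n k (m + 1) (oneL n (m + 1) (lowSQ n m i)) (lowSQ n m i)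
                  (oneR n (m + 1) (lowSQ n m i))
        | Shi.P i =>
            genSingle n k (m + 1) (oneL n (m + 1) (lowP n m i)) (lowP n m i) (pB i)
              - genSingle n k (m + 1) (pB i) (lowQ n m i) (oneR n (m + 1) (lowQ n m i))
              + genSingle n k (m + 1) (oneL n (m + 1) (lowSP n m i)) (lowSP n m i)
                  (oneR n (m + 1) (lowSP n m i))
        | Shi.sP i =>
            genSingle n k (m + 1) (oneL n (m + 1) (lowSP n m i)) (lowSP n m i) (qB i)
              - genSingle n k (m + 1) (sB i.succ) (lowP n m i) (oneR n (m + 1) (lowP n m i))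
              + genSingle n k (m + 1) (pB i) (lowSQ n m i) (oneR n (m + 1) (lowSQ n m i))
              + genSingle n k (m + 1) (oneL n (m + 1) (lowP n m i)) (lowP n m i) (sB i.succ)
        | Shi.sQ i =>
            genSingle n k (m + 1) (oneL n (m + 1) (lowSQ n m i)) (lowSQ n m i) (pB i)
              - genSingle n k (m + 1) (sB i.castSucc) (lowQ n m i) (oneR n (m + 1) (lowQ n m i))
              + genSingle n k (m + 1) (qB i) (lowSP n m i) (oneR n (m + 1) (lowSP n m i))
              + genSingle n k (m + 1) (oneL n (m + 1) (lowQ n m i)) (lowQ n m i) (sB i.castSucc)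

/-- The differential `∂_{m+1} : P_{m+1} → P_m` of the Chouhy–Solotar complex of the KLRW
algebra, extended from the generators by `A`-bimodule linearity:
`∂(a ⊗ w ⊗ b) = a · ∂(1 ⊗ w ⊗ 1) · b`. -/
noncomputable def bnd (m : ℕ) (v : P n k (m + 1)) : P n k m :=
  v.sum fun g c =>
    c • actL n k m (Finsupp.single g.1.1 1)
          (actR n k m (dGen n k m g.1.2.1) (Finsupp.single g.1.2.2 1))

end CS

lemma dlt_cocycle (i j k l : ℤ) : dlt i j k + dlt i k l = dlt j k l + dlt i j l := by
  unfold dlt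
  simp only [mul_nonneg_iff, sub_nonneg, sub_nonpos]
  split_ifs <;> omega

namespace CS

variable {n : ℕ}

/-- The product `a_x · a_y` in `A`, provided the source `x.2.1` of `x` is the target `y.1` of `y`
(otherwise the product in `A` is `0`, which this function does not see). -/
def basisMul (x y : B n) : B n := (x.1, y.2.1, x.2.2 + y.2.2 + dd n y.2.1 y.1 x.1)

@[simp] lemma basisMul_fst (x y : B n) : (basisMul x y).1 = x.1 := rfl
@[simp] lemma basisMul_snd_fst (x y : B n) : (basisMul x y).2.1 = y.2.1 := rfl

lemma basisMul_assoc {x y z : B n} (hxy : x.2.1 = y.1) (hyz : y.2.1 = z.1) :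
    basisMul (basisMul x y) z = basisMul x (basisMul y z) := by
  obtain ⟨x1, x2, x3⟩ := x
  obtain ⟨y1, y2, y3⟩ := y
  obtain ⟨z1, z2, z3⟩ := z
  dsimp only at hxy hyz
  subst hxy hyz
  have := dlt_cocycle ((z2 : ℕ) : ℤ) ((y2 : ℕ) : ℤ) ((x2 : ℕ) : ℤ) ((x1 : ℕ) : ℤ)
  simp only [basisMul, dd, Prod.mk.injEq, true_and]
  omega

@[simp] lemma eB_fst (v : Vtx n) : (eB v).1 = v := rfl
@[simp] lemma eB_snd_fst (v : Vtx n) : (eB v).2.1 = v := rfl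

lemma eB_basisMul {v : Vtx n} {y : B n} (h : y.1 = v) : basisMul (eB v) y = y := by
  obtain ⟨y1, y2, y3⟩ := y
  dsimp only at h
  subst h
  simp [basisMul, eB, dd, dlt]

lemma basisMul_eB {v : Vtx n} {x : B n} (h : x.2.1 = v) : basisMul x (eB v) = x := by
  obtain ⟨x1, x2, x3⟩ := x
  dsimp only at h
  subst h
  simp [basisMul, eB, dd, dlt]

variable {k : Type*} [Field k]

lemma genSingle_of_compat {m : ℕ} {a : B n} {w : Sym n m} {b : B n}
    (h : a.2.1 = symTgt n m w ∧ b.1 = symSrc n m w) :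
    genSingle n k m a w b = Finsupp.single ⟨(a, w, b), h⟩ 1 := dif_pos h

lemma genSingle_of_not_compat {m : ℕ} {a : B n} {w : Sym n m} {b : B n}
    (h : ¬ (a.2.1 = symTgt n m w ∧ b.1 = symSrc n m w)) :
    genSingle n k m a w b = 0 := dif_neg h

lemma single_eq_smul_genSingle {m : ℕ} (g : Gen n m) (c : k) :
    Finsupp.single g c = c • genSingle n k m g.1.1 g.1.2.1 g.1.2.2 := by
  rw [genSingle_of_compat g.2, Finsupp.smul_single_one]

lemma linearMap_ext_genSingle {m : ℕ} {M : Type*} [AddCommGroup M] [Module k M]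
    {φ ψ : P n k m →ₗ[k] M}
    (h : ∀ g : Gen n m, φ (genSingle n k m g.1.1 g.1.2.1 g.1.2.2) =
      ψ (genSingle n k m g.1.1 g.1.2.1 g.1.2.2)) : φ = ψ :=
  Finsupp.lhom_ext fun g c => by simp only [single_eq_smul_genSingle, map_smul, h]

variable (k) in
noncomputable def lmul (m : ℕ) (x : B n) : P n k m →ₗ[k] P n k m :=
  Finsupp.linearCombination k fun g =>
    if x.2.1 = g.1.1.1 then genSingle n k m (basisMul x g.1.1) g.1.2.1 g.1.2.2 else 0

variable (k) in
noncomputable def rmul (m : ℕ) (y : B n) : P n k m →ₗ[k] P n k m :=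
  Finsupp.linearCombination k fun g =>
    if g.1.2.2.2.1 = y.1 then genSingle n k m g.1.1 g.1.2.1 (basisMul g.1.2.2 y) else 0

lemma actL_single_one (m : ℕ) (x : B n) (v : P n k m) :
    actL n k m (Finsupp.single x 1) v = lmul k m x v := by
  rw [actL, Finsupp.sum_single_index (by simp)]
  simp only [one_mul]
  rfl

lemma actR_single_one (m : ℕ) (v : P n k m) (y : B n) :
    actR n k m v (Finsupp.single y 1) = rmul k m y v := by
  rw [actR, rmul, Finsupp.linearCombination_apply]
  congr 1
  funext g d
  rw [Finsupp.sum_single_index (by simp), mul_one]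
  rfl

lemma lmul_genSingle (m : ℕ) (x a : B n) (w : Sym n m) (b : B n) :
    lmul k m x (genSingle n k m a w b) =
      if x.2.1 = a.1 then genSingle n k m (basisMul x a) w b else 0 := by
  by_cases h : a.2.1 = symTgt n m w ∧ b.1 = symSrc n m w
  · rw [genSingle_of_compat h, lmul, Finsupp.linearCombination_single, one_smul]
  · rw [genSingle_of_not_compat h, map_zero, genSingle_of_not_compat (a := basisMul x a) h,
      ite_self]

lemma rmul_genSingle (m : ℕ) (y a : B n) (w : Sym n m) (b : B n) :
    rmul k m y (genSingle n k m a w b) =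
      if b.2.1 = y.1 then genSingle n k m a w (basisMul b y) else 0 := by
  by_cases h : a.2.1 = symTgt n m w ∧ b.1 = symSrc n m w
  · rw [genSingle_of_compat h, rmul, Finsupp.linearCombination_single, one_smul]
  · rw [genSingle_of_not_compat h, map_zero, genSingle_of_not_compat (b := basisMul b y) h,
      ite_self]

lemma lmul_lmul (m : ℕ) (x a : B n) (u : P n k m) :
    lmul k m x (lmul k m a u) = if x.2.1 = a.1 then lmul k m (basisMul x a) u else 0 := by
  suffices (lmul k m x).comp (lmul k m a) =
      if x.2.1 = a.1 then lmul k m (basisMul x a) else 0 by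
    rw [← LinearMap.comp_apply, this]; split_ifs <;> rfl
  refine linearMap_ext_genSingle fun g => ?_
  by_cases hag : a.2.1 = g.1.1.1
  · by_cases hxa : x.2.1 = a.1
    · simp [lmul_genSingle, hxa, hag, basisMul_assoc hxa hag]
    · simp [lmul_genSingle, hxa, hag]
  · split_ifs <;> simp [lmul_genSingle, hag]

lemma rmul_rmul (m : ℕ) (y z : B n) (u : P n k m) :
    rmul k m z (rmul k m y u) = if y.2.1 = z.1 then rmul k m (basisMul y z) u else 0 := by
  suffices (rmul k m z).comp (rmul k m y) =
      if y.2.1 = z.1 then rmul k m (basisMul y z) else 0 by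
    rw [← LinearMap.comp_apply, this]; split_ifs <;> rfl
  refine linearMap_ext_genSingle fun g => ?_
  by_cases hgy : g.1.2.2.2.1 = y.1
  · by_cases hyz : y.2.1 = z.1
    · simp [rmul_genSingle, hyz, hgy, basisMul_assoc hgy hyz]
    · simp [rmul_genSingle, hyz, hgy]
  · split_ifs <;> simp [rmul_genSingle, hgy]

lemma lmul_rmul_comm (m : ℕ) (x y : B n) (u : P n k m) :
    lmul k m x (rmul k m y u) = rmul k m y (lmul k m x u) := by
  rw [← LinearMap.comp_apply, ← LinearMap.comp_apply]
  congr 1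
  refine linearMap_ext_genSingle fun g => ?_
  by_cases hx : x.2.1 = g.1.1.1 <;> by_cases hy : g.1.2.2.2.1 = y.1 <;>
    simp [lmul_genSingle, rmul_genSingle, hx, hy]

variable (n k) in
noncomputable def boundary (m : ℕ) : P n k (m + 1) →ₗ[k] P n k m :=
  Finsupp.linearCombination k fun g => lmul k m g.1.1 (rmul k m g.1.2.2 (dGen n k m g.1.2.1))

lemma bnd_eq_boundary (m : ℕ) (v : P n k (m + 1)) : bnd n k m v = boundary n k m v := by
  simp only [bnd, boundary, Finsupp.linearCombination_apply, actL_single_one, actR_single_one]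

lemma boundary_genSingle (m : ℕ) (a : B n) (w : Sym n (m + 1)) (b : B n) :
    boundary n k m (genSingle n k (m + 1) a w b) =
      if a.2.1 = symTgt n (m + 1) w ∧ b.1 = symSrc n (m + 1) w then
        lmul k m a (rmul k m b (dGen n k m w))
      else 0 := by
  by_cases h : a.2.1 = symTgt n (m + 1) w ∧ b.1 = symSrc n (m + 1) w
  · rw [genSingle_of_compat h, if_pos h, boundary, Finsupp.linearCombination_single, one_smul]
  · rw [genSingle_of_not_compat h, if_neg h, map_zero]

lemma boundary_lmul (m : ℕ) (x : B n) (u : P n k (m + 1)) :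
    boundary n k m (lmul k (m + 1) x u) = lmul k m x (boundary n k m u) := by
  rw [← LinearMap.comp_apply, ← LinearMap.comp_apply]
  congr 1
  refine linearMap_ext_genSingle fun g => ?_
  by_cases hx : x.2.1 = g.1.1.1 <;>
    simp [lmul_genSingle, boundary_genSingle, g.2, hx, lmul_lmul]

lemma boundary_rmul (m : ℕ) (y : B n) (u : P n k (m + 1)) :
    boundary n k m (rmul k (m + 1) y u) = rmul k m y (boundary n k m u) := by
  rw [← LinearMap.comp_apply, ← LinearMap.comp_apply]
  congr 1
  refine linearMap_ext_genSingle fun g => ?_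
  by_cases hy : g.1.2.2.2.1 = y.1 <;>
    simp [rmul_genSingle, boundary_genSingle, g.2, hy, rmul_rmul, ← lmul_rmul_comm]

variable (n k) in
noncomputable def augmentation : P n k 0 →ₗ[k] A n k :=
  Finsupp.linearCombination k fun g =>
    if g.1.1.2.1 = g.1.2.2.1 then Finsupp.single (basisMul g.1.1 g.1.2.2) 1 else 0

lemma bnd0_eq_augmentation (v : P n k 0) : bnd0 n k v = augmentation n k v := by
  rw [bnd0, augmentation, Finsupp.linearCombination_apply]
  congr 1
  funext g c
  split_ifs
  · rw [Finsupp.smul_single_one]; rfl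
  · rw [smul_zero]

lemma augmentation_genSingle (a : B n) (v : Vtx n) (b : B n) :
    augmentation n k (genSingle n k 0 a v b) =
      if a.2.1 = v ∧ b.1 = v then Finsupp.single (basisMul a b) 1 else 0 := by
  by_cases h : a.2.1 = v ∧ b.1 = v
  · rw [genSingle_of_compat h, if_pos h, augmentation, Finsupp.linearCombination_single,
      one_smul, if_pos (h.1.trans h.2.symm)]
  · rw [genSingle_of_not_compat h, if_neg h, map_zero]

@[simp] lemma dd_self_left (v w : Vtx n) : dd n v v w = 0 := by
  simp [dd, dlt]

@[simp] lemma dd_self_right (v w : Vtx n) : dd n v w w = 0 := by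
  simp [dd, dlt]

@[simp] lemma dd_castSucc_succ_castSucc (i : Fin n) : dd n i.castSucc i.succ i.castSucc = 1 := by
  simp [dd, dlt]

@[simp] lemma dd_succ_castSucc_succ (i : Fin n) : dd n i.succ i.castSucc i.succ = 1 := by
  simp [dd, dlt]

lemma boundary_dGen_deg_two (w : Sym n 2) : boundary n k 0 (dGen n k 1 w) = 0 := by
  cases w <;>
    simp [dGen, boundary_genSingle (m := 0), lmul_genSingle (m := 0), rmul_genSingle (m := 0),
      oneL, oneR, lowP, lowQ, lowSP, lowSQ, symTgt, symSrc, arrTgt, arrSrc, arrB,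
      basisMul, eB, pB, qB, sB]

section LowerGenerators

variable (m : ℕ) (i : Fin n)

@[simp] lemma lowP_succ : lowP n (m + 1) i = Shi.P i := rfl
@[simp] lemma lowQ_succ : lowQ n (m + 1) i = Shi.Q i := rfl
@[simp] lemma lowSP_succ : lowSP n (m + 1) i = Shi.sP i := rfl
@[simp] lemma lowSQ_succ : lowSQ n (m + 1) i = Shi.sQ i := rfl

@[simp] lemma symTgt_lowP : symTgt n (m + 1) (lowP n m i) = i.succ := by cases m <;> rfl
@[simp] lemma symTgt_lowQ : symTgt n (m + 1) (lowQ n m i) = i.castSucc := by cases m <;> rfl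
@[simp] lemma symTgt_lowSP : symTgt n (m + 1) (lowSP n m i) = i.succ := by cases m <;> rfl
@[simp] lemma symTgt_lowSQ : symTgt n (m + 1) (lowSQ n m i) = i.castSucc := by cases m <;> rfl

@[simp] lemma symSrc_lowP :
    symSrc n (m + 1) (lowP n m i) = if Even (m + 1) then i.succ else i.castSucc := by
  cases m <;> rfl
@[simp] lemma symSrc_lowQ :
    symSrc n (m + 1) (lowQ n m i) = if Even (m + 1) then i.castSucc else i.succ := by
  cases m <;> rfl
@[simp] lemma symSrc_lowSP :
    symSrc n (m + 1) (lowSP n m i) = if Even (m + 1) then i.castSucc else i.succ := by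
  cases m <;> rfl
@[simp] lemma symSrc_lowSQ :
    symSrc n (m + 1) (lowSQ n m i) = if Even (m + 1) then i.succ else i.castSucc := by
  cases m <;> rfl

lemma symTgt_shi (w : Shi n) : symTgt n (m + 1 + 1) w = shiTgt w := rfl

lemma symSrc_shi (w : Shi n) :
    symSrc n (m + 1 + 1) w = if Even m then shiSrcE w else shiSrcO w := by
  simp only [symSrc, Nat.even_add_one, not_not]

end LowerGenerators

lemma boundary_dGen_deg_add_three (m : ℕ) (w : Sym n (m + 3)) :
    boundary n k (m + 1) (dGen n k (m + 2) w) = 0 := by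
  by_cases hm : Even m <;> cases w <;>
    simp [dGen, Nat.even_add, hm, boundary_genSingle (m := m + 1), lmul_genSingle (m := m + 1),
      rmul_genSingle (m := m + 1), oneL, oneR, symTgt_shi, symSrc_shi, shiTgt, shiSrcE,
      shiSrcO, basisMul, eB, pB, qB, sB] <;>
    abel

lemma boundary_dGen (m : ℕ) (w : Sym n (m + 2)) : boundary n k m (dGen n k (m + 1) w) = 0 :=
  match m with
  | 0 => boundary_dGen_deg_two w
  | m + 1 => boundary_dGen_deg_add_three m w

theorem boundary_comp_boundary (m : ℕ) : (boundary n k m).comp (boundary n k (m + 1)) = 0 := by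
  refine linearMap_ext_genSingle fun g => ?_
  rw [LinearMap.comp_apply, boundary_genSingle, if_pos g.2, boundary_lmul, boundary_rmul,
    boundary_dGen, map_zero, map_zero, LinearMap.zero_apply]

lemma augmentation_lmul_rmul_dGen (γ : Arr n) {a b : B n} (ha : a.2.1 = arrTgt γ)
    (hb : b.1 = arrSrc γ) : augmentation n k (lmul k 0 a (rmul k 0 b (dGen n k 0 γ))) = 0 := by
  have hγ : (arrB γ).1 = arrTgt γ ∧ (arrB γ).2.1 = arrSrc γ := by cases γ <;> exact ⟨rfl, rfl⟩
  simp only [dGen, map_sub, rmul_genSingle (m := 0), lmul_genSingle (m := 0), eB_fst,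
    eB_snd_fst, hγ, ha, hb, if_true]
  rw [basisMul_eB ha, eB_basisMul hb, augmentation_genSingle, augmentation_genSingle]
  simp only [basisMul_fst, basisMul_snd_fst, hγ, ha, hb, and_self, if_true]
  rw [basisMul_assoc (ha.trans hγ.1.symm) (hγ.2.trans hb.symm), sub_self]

theorem augmentation_comp_boundary : (augmentation n k).comp (boundary n k 0) = 0 :=
  linearMap_ext_genSingle fun g => by
    rw [LinearMap.comp_apply, boundary_genSingle, if_pos g.2,
      augmentation_lmul_rmul_dGen _ g.2.1 g.2.2, LinearMap.zero_apply]

end CS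

theorem chouhy_solotar_is_complex_general (n : ℕ) (k : Type*) [Field k] :
    (∀ (m : ℕ) (v : CS.P n k (m + 2)), CS.bnd n k m (CS.bnd n k (m + 1) v) = 0) ∧
    (∀ v : CS.P n k 1, CS.bnd0 n k (CS.bnd n k 0 v) = 0) := by
  refine ⟨fun m v => ?_, fun v => ?_⟩
  · rw [CS.bnd_eq_boundary, CS.bnd_eq_boundary, ← LinearMap.comp_apply,
      CS.boundary_comp_boundary, LinearMap.zero_apply]
  · rw [CS.bnd_eq_boundary, CS.bnd0_eq_augmentation, ← LinearMap.comp_apply,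
      CS.augmentation_comp_boundary, LinearMap.zero_apply]

/-- For every `m ≥ 1` one has `∂_m ∘ ∂_{m+1} = 0`, and moreover `∂_0 ∘ ∂_1 = 0`: the
bimodules `P_m` with the maps `∂_m` form a chain complex of `(A,A)`-bimodules augmented
over `A` by `∂_0`.  (Here `CS.bnd n k m` is the differential `∂_{m+1} : P_{m+1} → P_m`
and `CS.bnd0 n k` is `∂_0 : P_0 → A`.) -/
theorem chouhy_solotar_is_complex (n : ℕ) (hn : 1 ≤ n) (k : Type*) [Field k] :
    (∀ (m : ℕ) (v : CS.P n k (m + 2)), CS.bnd n k m (CS.bnd n k (m + 1) v) = 0) ∧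
    (∀ v : CS.P n k 1, CS.bnd0 n k (CS.bnd n k 0 v) = 0) :=
  chouhy_solotar_is_complex_general n k
end
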